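/- arXiv:1312.3756 — 4 statements merged into one kernel-verified Lean document; each statement's English description precedes it below -/
import Mathlib

section
/- Let A be a simple Artinian ring and let (R',P) be a strict fractional prime in A. If R is a semisimple subring of A with R ≠ A, then R' is not contained in R. -/
open Pointwise

/-- `P` is a two-sided ideal of the subring `R` of `A`. -/
def IsIdealOf {A : Type*} [Ring A] (R : Subring A) (P : Set A) : Prop :=
  P ⊆ (R : Set A) ∧ (0 : A) ∈ P ∧ (∀ x ∈ P, ∀ y ∈ P, x + y ∈ P) ∧ (∀ x ∈ P, -x ∈ P) ∧
    (∀ r ∈ R, ∀ p ∈ P, r * p ∈ P) ∧ (∀ r ∈ R, ∀ p ∈ P, p * r ∈ P)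

/-- `(R, P)` is a prime in the ring `A`. -/
def IsPrimeIn {A : Type*} [Ring A] (R : Subring A) (P : Set A) : Prop :=
  IsIdealOf R P ∧ ∀ x y : A, (∀ r ∈ R, x * r * y ∈ P) → x ∈ P ∨ y ∈ P

/-- `(R, P)` is a strict fractional prime in the ring `A`. -/
def IsStrictFractionalPrime {A : Type*} [Ring A] (R : Subring A) (P : Set A) : Prop :=
  IsPrimeIn R P ∧ ∀ r : A, r ≠ 0 → ∃ x ∈ R, ∃ y ∈ R, x * r * y ≠ 0 ∧ x * r * y ∈ R

/-- The set of elements of the subring `R` which are regular in `R`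
(non-zero-divisors of the ring `R`). -/
def regularIn {A : Type*} [Ring A] (R : Subring A) : Set A :=
  {x : A | x ∈ R ∧ (∀ y ∈ R, x * y = 0 → y = 0) ∧ (∀ y ∈ R, y * x = 0 → y = 0)}

/-- A ring is Goldie if its set of regular elements satisfies the left and right Ore
conditions and the corresponding Ore localization is a semisimple ring. -/
def IsGoldieRing (R : Type*) [Ring R] : Prop :=
  (∀ (r : R), ∀ s ∈ nonZeroDivisors R, ∃ r' : R, ∃ s' ∈ nonZeroDivisors R, s' * r = r' * s) ∧
  (∀ (r : R), ∀ s ∈ nonZeroDivisors R, ∃ r' : R, ∃ s' ∈ nonZeroDivisors R, r * s' = s * r') ∧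
  ∃ _i : OreLocalization.OreSet (nonZeroDivisors R),
    IsSemisimpleRing (OreLocalization (nonZeroDivisors R) R)

/-- `A^P`, the set of elements of `A` stabilizing `P` on both sides. -/
def stabilizerSet {A : Type*} [Ring A] (P : Set A) : Set A :=
  {a : A | (∀ p ∈ P, a * p ∈ P) ∧ ∀ p ∈ P, p * a ∈ P}

/-- The fractional `R`-ideals of `A`. -/
def IsFractionalIdeal {A : Type*} [Ring A] (R : Subring A) (I : Set A) : Prop :=
  ((0 : A) ∈ I ∧ (∀ x ∈ I, ∀ y ∈ I, x + y ∈ I) ∧ (∀ x ∈ I, -x ∈ I)) ∧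
  (∀ r ∈ R, ∀ x ∈ I, r * x ∈ I) ∧ (∀ r ∈ R, ∀ x ∈ I, x * r ∈ I) ∧
  (∃ u ∈ I, u ∈ regularIn R) ∧ (∃ r ∈ regularIn R, ∀ x ∈ I, r * x ∈ (R : Set A))

/-- The fractional ideal `RaR` generated by an element `a ∈ A`. -/
def genFracIdeal {A : Type*} [Ring A] (R : Subring A) (a : A) : Set A :=
  (R : Set A) * {a} * (R : Set A)

/-- `v(I) = (P : I) = {a ∈ A ∣ aI ⊆ P}`. -/
def vP {A : Type*} [Ring A] (P I : Set A) : Set A :=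
  {a : A | ∀ x ∈ I, a * x ∈ P}

/-- The additive subgroup generated by the `n`-fold products of elements of `P`. -/
def idealPow {A : Type*} [Ring A] (P : Set A) (n : ℕ) : Set A :=
  (AddSubgroup.closure (P ^ n) : Set A)

/-- `C(P)`: the elements of `R` which are regular modulo `P`. -/
def CP {A : Type*} [Ring A] (R : Subring A) (P : Set A) : Set A :=
  {x : A | x ∈ R ∧ (∀ y ∈ R, x * y ∈ P → y ∈ P) ∧ ∀ y ∈ R, y * x ∈ P → y ∈ P}

/-- `R` is an order in `A`: every regular element of `R` is invertible in `A` and every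
element of `A` is of the form `s⁻¹ * r` and of the form `r' * s'⁻¹` with `r, r' ∈ R` and
`s, s'` regular in `R`. -/
def IsOrderIn {A : Type*} [Ring A] (R : Subring A) : Prop :=
  (∀ s ∈ regularIn R, IsUnit s) ∧
  (∀ a : A, ∃ s ∈ regularIn R, ∃ r ∈ (R : Set A), s * a = r) ∧
  (∀ a : A, ∃ s ∈ regularIn R, ∃ r ∈ (R : Set A), a * s = r)

/-- `R` is a Dubrovin valuation ring of `A` with associated ideal `P`:
`P` is a two-sided ideal of `R` such that `R/P` is a simple Artinian ring and for every
`a ∈ A \ R` there are `x, y ∈ R` with `xa ∈ R \ P` and `ay ∈ R \ P`. -/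
def IsDubrovinValuation {A : Type*} [Ring A] (R : Subring A) (P : Set A) : Prop :=
  IsIdealOf R P ∧
  (∀ Q : TwoSidedIdeal R, (∀ x : R, x ∈ Q ↔ (x : A) ∈ P) →
    IsSimpleRing Q.ringCon.Quotient ∧ IsArtinianRing Q.ringCon.Quotient) ∧
  ∀ a : A, a ∉ R →
    (∃ x ∈ R, x * a ∈ R ∧ x * a ∉ P) ∧ (∃ y ∈ R, a * y ∈ R ∧ a * y ∉ P)

/-- `P` coincides with the Jacobson radical of the subring `R` (the intersection of the
maximal left ideals of `R`). -/
def IsJacobsonRadicalOf {A : Type*} [Ring A] (R : Subring A) (P : Set A) : Prop :=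
  ∀ x : R, (x : A) ∈ P ↔ x ∈ (⊥ : Ideal R).jacobson

section AuxKey

variable {B : Type*} [Ring B]

/-- From a complemented left ideal, get a relative right identity. -/
lemma aux_idem (L K : Submodule B B) (hK : IsCompl L K) :
    ∃ e ∈ L, ∀ x ∈ L, x * e = x := by
  obtain ⟨e, k, hek, -⟩ := Submodule.existsUnique_add_of_isCompl hK 1
  refine ⟨e, e.2, fun x hx => ?_⟩
  obtain ⟨u, v, -, huniq⟩ := Submodule.existsUnique_add_of_isCompl hK x
  have h1 : (⟨x * (e : B), by rw [← smul_eq_mul]; exact L.smul_mem x e.2⟩ : L) = u ∧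
      (⟨x * (k : B), by rw [← smul_eq_mul]; exact K.smul_mem x k.2⟩ : K) = v := by
    apply huniq
    show x * (e : B) + x * (k : B) = x
    rw [← mul_add, hek, mul_one]
  have h2 : (⟨x, hx⟩ : L) = u ∧ (⟨0, K.zero_mem⟩ : K) = v := by
    apply huniq
    show x + 0 = x
    rw [add_zero]
  exact congrArg Subtype.val (h1.1.trans h2.1.symm)

/-- Key structure in a nontrivial semisimple ring: a nonzero idempotent `f` whose corner
`f B f` is a division ring, together with a nonzero central idempotent `c` lying in the
left span of `f * B`. -/
lemma aux_key [IsSemisimpleRing B] [Nontrivial B] :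
    ∃ f c : B, f ≠ 0 ∧ f * f = f ∧
      (∀ z : B, z ≠ 0 → f * z * f = z → ∃ z', f * z' * f = z' ∧ z' * z = f ∧ z * z' = f) ∧
      c * c = c ∧ c ≠ 0 ∧ (∀ r : B, r * c = c * r) ∧
      c ∈ Submodule.span B (Set.range fun b => f * b) := by
  obtain ⟨L, hL⟩ := IsSemisimpleModule.exists_simple_submodule B B
  haveI := hL
  obtain ⟨KL, hKL⟩ := exists_isCompl L
  obtain ⟨f, hfL, hLf⟩ := aux_idem L KL hKL
  have hff : f * f = f := hLf f hfL
  have hf0 : f ≠ 0 := by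
    intro h
    obtain ⟨a, b, hab⟩ := IsSimpleModule.nontrivial B L
    apply hab
    apply Subtype.ext
    have ha : (a : B) = 0 := by rw [← hLf a a.2, h, mul_zero]
    have hb : (b : B) = 0 := by rw [← hLf b b.2, h, mul_zero]
    rw [ha, hb]
  -- corner division, left inverses
  have hinv : ∀ z : B, z ≠ 0 → f * z * f = z → ∃ z', f * z' * f = z' ∧ z' * z = f := by
    intro z hz hfzf
    have hfz : f * z = z := by
      conv_lhs => rw [← hfzf]
      calc f * (f * z * f) = (f * f) * z * f := by noncomm_ring
        _ = f * z * f := by rw [hff]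
        _ = z := hfzf
    have hmemz : ∀ x : L, (x : B) * z ∈ L := by
      intro x
      have hx : (x : B) * z = ((x : B) * (f * z)) * f := by
        conv_lhs => rw [← hfzf]
        noncomm_ring
      rw [hx, ← smul_eq_mul]
      exact L.smul_mem _ hfL
    let φ : L →ₗ[B] L :=
      { toFun := fun x => ⟨(x : B) * z, hmemz x⟩
        map_add' := fun x y => Subtype.ext (by simp [add_mul])
        map_smul' := fun r x => Subtype.ext (by simp [mul_assoc]) }
    have hφ : φ ≠ 0 := by
      intro h
      apply hz
      have h2 := LinearMap.congr_fun h ⟨f, hfL⟩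
      have h3 : ((φ ⟨f, hfL⟩ : L) : B) = 0 := by rw [h2]; rfl
      have h4 : ((φ ⟨f, hfL⟩ : L) : B) = f * z := rfl
      rw [h4, hfz] at h3
      exact h3
    obtain ⟨w, hw⟩ := LinearMap.surjective_of_ne_zero hφ ⟨f, hfL⟩
    have hwz : (w : B) * z = f := congrArg Subtype.val hw
    refine ⟨f * (w : B), ?_, ?_⟩
    · calc f * (f * (w : B)) * f = (f * f) * ((w : B) * f) := by noncomm_ring
        _ = f * ((w : B) * f) := by rw [hff]
        _ = f * (w : B) := by rw [hLf w w.2]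
    · calc f * (w : B) * z = f * ((w : B) * z) := by noncomm_ring
        _ = f * f := by rw [hwz]
        _ = f := hff
  have hdiv : ∀ z : B, z ≠ 0 → f * z * f = z →
      ∃ z', f * z' * f = z' ∧ z' * z = f ∧ z * z' = f := by
    intro z hz hfzf
    obtain ⟨z', hz'f, hz'z⟩ := hinv z hz hfzf
    have hz'0 : z' ≠ 0 := fun h => hf0 (by rw [← hz'z, h, zero_mul])
    obtain ⟨z'', hz''f, hz''z'⟩ := hinv z' hz'0 hz'f
    have hfz : f * z = z := by
      conv_lhs => rw [← hfzf]
      calc f * (f * z * f) = (f * f) * z * f := by noncomm_ring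
        _ = f * z * f := by rw [hff]
        _ = z := hfzf
    have hz''fe : z'' * f = z'' := by
      conv_lhs => rw [← hz''f]
      calc (f * z'' * f) * f = f * z'' * (f * f) := by noncomm_ring
        _ = f * z'' * f := by rw [hff]
        _ = z'' := hz''f
    refine ⟨z', hz'f, hz'z, ?_⟩
    calc z * z' = f * (z * z') := by rw [← mul_assoc, hfz]
      _ = (z'' * z') * (z * z') := by rw [hz''z']
      _ = z'' * (z' * z) * z' := by noncomm_ring
      _ = z'' * f * z' := by rw [hz'z]
      _ = z'' * z' := by rw [hz''fe]
      _ = f := hz''z'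
  -- the two-sided ideal N spanned by f, and its central idempotent
  set N : Submodule B B := Submodule.span B (Set.range fun b => f * b) with hNdef
  have hfN : f ∈ N := Submodule.subset_span ⟨1, mul_one f⟩
  have hNr : ∀ x ∈ N, ∀ r : B, x * r ∈ N := by
    intro x hx
    refine Submodule.span_induction (p := fun x _ => ∀ r : B, x * r ∈ N) ?_ ?_ ?_ ?_ hx
    · rintro y ⟨b, rfl⟩ r
      exact Submodule.subset_span ⟨b * r, by noncomm_ring⟩
    · intro r; rw [zero_mul]; exact N.zero_mem
    · intro a b _ _ ha hb r
      rw [add_mul]; exact N.add_mem (ha r) (hb r)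
    · intro a x _ hx r
      rw [smul_eq_mul, mul_assoc, ← smul_eq_mul]
      exact N.smul_mem a (hx r)
  obtain ⟨KN, hKN⟩ := exists_isCompl N
  obtain ⟨c, hcN, hc⟩ := aux_idem N KN hKN
  have hcc : c * c = c := hc c hcN
  have hc0 : c ≠ 0 := fun h => hf0 (by rw [← hc f hfN, h, mul_zero])
  -- annihilator ideal
  let J : Submodule B B :=
    { carrier := {y : B | ∀ x ∈ N, x * y = 0}
      zero_mem' := fun x _ => mul_zero x
      add_mem' := fun {a b} ha hb x hx => by rw [mul_add, ha x hx, hb x hx, add_zero]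
      smul_mem' := fun r y hy x hx => by
        rw [smul_eq_mul, ← mul_assoc]
        exact hy _ (hNr x hx r) }
  obtain ⟨KT, hKT⟩ := exists_isCompl (N ⊓ J)
  obtain ⟨eT, heT, hT⟩ := aux_idem _ _ hKT
  have heT0 : eT = 0 := by
    have h1 : eT * eT = 0 :=
      (Submodule.mem_inf.mp heT).2 eT (Submodule.mem_inf.mp heT).1
    have h2 : eT * eT = eT := hT eT heT
    rw [← h2, h1]
  have hTzero : ∀ x ∈ N ⊓ J, x = 0 := by
    intro x hx
    rw [← hT x hx, heT0, mul_zero]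
  have hcen : ∀ r : B, r * c = c * r := by
    intro r
    have hmem : r * c - c * r ∈ N ⊓ J := by
      rw [Submodule.mem_inf]
      constructor
      · exact N.sub_mem (by rw [← smul_eq_mul]; exact N.smul_mem r hcN) (hNr c hcN r)
      · intro x hx
        have h1 : x * (r * c) = x * r := by rw [← mul_assoc, hc _ (hNr x hx r)]
        have h2 : x * (c * r) = x * r := by rw [← mul_assoc, hc x hx]
        rw [mul_sub, h1, h2, sub_self]
    exact sub_eq_zero.mp (hTzero _ hmem)
  exact ⟨f, c, hf0, hff, hdiv, hcc, hc0, hcen, hcN⟩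

end AuxKey

section AuxMain

variable {A : Type*} [Ring A] [IsSimpleRing A]

lemma aux_main {R : Subring A} [IsSemisimpleRing R]
    (WE : ∀ a : A, a ≠ 0 → ∃ x y : R, (x : A) * a * y ≠ 0 ∧ (x : A) * a * y ∈ R) :
    R = ⊤ := by
  haveI : Nontrivial R :=
    ⟨1, 0, fun h => one_ne_zero (α := A) (by simpa using congrArg Subtype.val h)⟩
  obtain ⟨f, c, hf0, hff, hdiv, hcc, hc0, hcen, hcN⟩ := aux_key (B := R)
  have hF0 : (f : A) ≠ 0 := fun h => hf0 (by exact_mod_cast h)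
  have hFF : (f : A) * f = f := by exact_mod_cast hff
  have hC0 : (c : A) ≠ 0 := fun h => hc0 (by exact_mod_cast h)
  have hCC : (c : A) * c = c := by exact_mod_cast hcc
  have hCcomm : ∀ x : R, (c : A) * x = (x : A) * c := fun x => by exact_mod_cast (hcen x).symm
  have hKK : ((1 : A) - c) * ((1 : A) - c) = (1 : A) - c := by
    have h : ((1 : A) - c) * ((1 : A) - c) = 1 - c - c + (c : A) * c := by noncomm_ring
    rw [h, hCC]; abel
  have hCK : (c : A) * ((1 : A) - c) = 0 := by rw [mul_sub, mul_one, hCC, sub_self]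
  -- Step: C * A * (1 - C) = 0
  have hCA : ∀ a : A, (c : A) * a * ((1 : A) - c) = 0 := by
    intro a
    by_contra hne0
    obtain ⟨x, y, hxy0, hxyR⟩ := WE _ hne0
    apply hxy0
    have hKy : ((1 : A) - c) * y = (y : A) * ((1 : A) - c) := by
      rw [sub_mul, mul_sub, one_mul, mul_one, hCcomm y]
    have h1 : (c : A) * ((x : A) * ((c : A) * a * (1 - c)) * y) * ((1 : A) - c)
        = (x : A) * ((c : A) * a * (1 - c)) * y := by
      calc (c : A) * ((x : A) * ((c : A) * a * (1 - c)) * y) * ((1 : A) - c)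
          = ((c : A) * x) * ((c : A) * a * ((1 - c) * ((y : A) * (1 - c)))) := by noncomm_ring
        _ = ((x : A) * c) * ((c : A) * a * ((1 - c) * ((1 - (c : A)) * y))) := by
            rw [hCcomm x, hKy]
        _ = (x : A) * (((c : A) * c) * a * ((1 - c) * (1 - c))) * y := by noncomm_ring
        _ = (x : A) * ((c : A) * a * (1 - c)) * y := by rw [hCC, hKK]
    have h2 : (c : A) * ((x : A) * ((c : A) * a * (1 - c)) * y) * ((1 : A) - c) = 0 := by
      obtain ⟨r, hr⟩ : ∃ r : R, (r : A) = (x : A) * ((c : A) * a * (1 - c)) * y := ⟨⟨_, hxyR⟩, rfl⟩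
      rw [← hr, hCcomm r, mul_assoc, hCK, mul_zero]
    rw [← h1, h2]
  -- Step: 1 - C = 0 via simplicity of A
  have hK0 : (1 : A) - c = 0 := by
    by_contra hK
    have hz0 : (0 : A) ∈ {a : A | ∀ a' : A, (c : A) * a' * a = 0} := fun a' => mul_zero _
    have hadd : ∀ {x y : A}, x ∈ {a : A | ∀ a' : A, (c : A) * a' * a = 0} →
        y ∈ {a : A | ∀ a' : A, (c : A) * a' * a = 0} →
        x + y ∈ {a : A | ∀ a' : A, (c : A) * a' * a = 0} :=
      fun {x y} hx hy a' => by rw [mul_add, hx a', hy a', add_zero]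
    have hneg : ∀ {x : A}, x ∈ {a : A | ∀ a' : A, (c : A) * a' * a = 0} →
        -x ∈ {a : A | ∀ a' : A, (c : A) * a' * a = 0} :=
      fun {x} hx a' => by rw [mul_neg, hx a', neg_zero]
    have hml : ∀ {x y : A}, y ∈ {a : A | ∀ a' : A, (c : A) * a' * a = 0} →
        x * y ∈ {a : A | ∀ a' : A, (c : A) * a' * a = 0} := fun {x y} hy a' => by
      rw [show (c : A) * a' * (x * y) = (c : A) * (a' * x) * y by noncomm_ring]
      exact hy (a' * x)
    have hmr : ∀ {x y : A}, x ∈ {a : A | ∀ a' : A, (c : A) * a' * a = 0} →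
        x * y ∈ {a : A | ∀ a' : A, (c : A) * a' * a = 0} := fun {x y} hx a' => by
      rw [show (c : A) * a' * (x * y) = ((c : A) * a' * x) * y by noncomm_ring, hx a', zero_mul]
    have h1T := IsSimpleRing.one_mem_of_ne_zero_mem
      (TwoSidedIdeal.mk' {a : A | ∀ a' : A, (c : A) * a' * a = 0} hz0 hadd hneg hml hmr)
      hK ((TwoSidedIdeal.mem_mk' _ _ _ _ _ _ _).mpr fun a' => hCA a')
    have h := ((TwoSidedIdeal.mem_mk' _ _ _ _ _ _ _).mp h1T) 1
    rw [mul_one, mul_one] at h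
    exact hC0 h
  have hc1 : c = (1 : R) := by
    have : (c : A) = 1 := by
      have := sub_eq_zero.mp hK0; exact this.symm
    exact Subtype.ext (by simpa using this)
  have hNtop : ∀ x : R, x ∈ Submodule.span R (Set.range fun b => f * b) := by
    intro x
    have h := (Submodule.span R (Set.range fun b => f * b)).smul_mem x hcN
    rwa [smul_eq_mul, hc1, mul_one] at h
  -- detection
  have hdet : ∀ t : R, t ≠ 0 → ∃ u v : R, f * u * t * v * f ≠ 0 := by
    intro t ht
    by_contra hcon
    push_neg at hcon
    have C1 : ∀ b : R, ∀ v : R, b * t * v * f = 0 := by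
      intro b
      refine Submodule.span_induction (p := fun b _ => ∀ v : R, b * t * v * f = 0)
        ?_ ?_ ?_ ?_ (hNtop b)
      · rintro y ⟨u, rfl⟩ v
        exact hcon u v
      · intro v; rw [zero_mul, zero_mul, zero_mul]
      · intro a b _ _ ha hb v
        rw [add_mul, add_mul, add_mul, ha v, hb v, add_zero]
      · intro r x _ hx v
        calc r • x * t * v * f = r * (x * t * v * f) := by rw [smul_eq_mul]; noncomm_ring
          _ = 0 := by rw [hx v, mul_zero]
    have htvf : ∀ v : R, t * v * f = 0 := by
      intro v
      have h := C1 1 v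
      rwa [one_mul] at h
    have C2 : ∀ b : R, ∀ u : R, t * u * b = 0 := by
      intro b
      refine Submodule.span_induction (p := fun b _ => ∀ u : R, t * u * b = 0)
        ?_ ?_ ?_ ?_ (hNtop b)
      · rintro y ⟨w, rfl⟩ u
        calc t * u * (f * w) = (t * u * f) * w := by noncomm_ring
          _ = 0 := by rw [htvf u, zero_mul]
      · intro u; rw [mul_zero]
      · intro a b _ _ ha hb u
        rw [mul_add, ha u, hb u, add_zero]
      · intro r x _ hx u
        calc t * u * (r • x) = t * (u * r) * x := by rw [smul_eq_mul]; noncomm_ring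
          _ = 0 := hx (u * r)
    have h := C2 1 1
    rw [mul_one, mul_one] at h
    exact ht h
  -- corner
  have hcorner : ∀ a : A, ∃ r : R, (f : A) * a * f = r := by
    intro a
    rcases eq_or_ne ((f : A) * a * f) 0 with h0 | hb0
    · exact ⟨0, by rw [h0]; simp⟩
    obtain ⟨x, y, ht0, htR⟩ := WE _ hb0
    set t : R := ⟨(x : A) * ((f : A) * a * f) * y, htR⟩ with htdef
    have ht : t ≠ 0 := fun h => ht0 (by
      have : (t : A) = 0 := by rw [h]; simp
      simpa [htdef] using this)
    obtain ⟨u, v, hg0⟩ := hdet t ht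
    set g : R := f * u * t * v * f with hgdef
    have hgf : f * g * f = g := by
      rw [hgdef]
      calc f * (f * u * t * v * f) * f = (f * f) * u * t * v * (f * f) := by noncomm_ring
        _ = f * u * t * v * f := by rw [hff]
    set X : R := f * u * x * f with hXdef
    set Y : R := f * y * v * f with hYdef
    have hXf : f * X * f = X := by
      rw [hXdef]
      calc f * (f * u * x * f) * f = (f * f) * u * x * (f * f) := by noncomm_ring
        _ = f * u * x * f := by rw [hff]
    have hYf : f * Y * f = Y := by
      rw [hYdef]
      calc f * (f * y * v * f) * f = (f * f) * y * v * (f * f) := by noncomm_ring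
        _ = f * y * v * f := by rw [hff]
    have htA : (t : A) = (x : A) * ((f : A) * a * (f : A)) * (y : A) := rfl
    have hgXY : (g : A) = (X : A) * ((f : A) * a * (f : A)) * (Y : A) := by
      have e1 : (X : A) * ((f : A) * a * (f : A)) * (Y : A)
          = (f : A) * (u : A) * (x : A) * (((f : A) * (f : A)) * a * ((f : A) * (f : A)))
            * (y : A) * (v : A) * (f : A) := by
        rw [hXdef, hYdef]; push_cast; noncomm_ring
      rw [e1, hFF]
      have e2 : (g : A) = (f : A) * (u : A) * (t : A) * (v : A) * (f : A) := by
        rw [hgdef]; push_cast; rfl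
      rw [e2, htA]
      noncomm_ring
    have hX0 : X ≠ 0 := by
      intro h
      apply hg0
      have h2 : (g : A) = 0 := by rw [hgXY, h]; simp
      exact_mod_cast h2
    have hY0 : Y ≠ 0 := by
      intro h
      apply hg0
      have h2 : (g : A) = 0 := by rw [hgXY, h]; simp
      exact_mod_cast h2
    obtain ⟨X', hX'f, hX'X, hXX'⟩ := hdiv X hX0 hXf
    obtain ⟨Y', hY'f, hY'Y, hYY'⟩ := hdiv Y hY0 hYf
    refine ⟨X' * g * Y', ?_⟩
    have e3 : ((X' * g * Y' : R) : A) = (X' : A) * (g : A) * (Y' : A) := by push_cast; rfl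
    rw [e3, hgXY]
    have e4 : (X' : A) * ((X : A) * ((f : A) * a * (f : A)) * (Y : A)) * (Y' : A)
        = ((X' : A) * (X : A)) * ((f : A) * a * (f : A)) * ((Y : A) * (Y' : A)) := by
      noncomm_ring
    have e5 : (X' : A) * (X : A) = (f : A) := by exact_mod_cast hX'X
    have e6 : (Y : A) * (Y' : A) = (f : A) := by exact_mod_cast hYY'
    rw [e4, e5, e6]
    rw [show (f : A) * ((f : A) * a * (f : A)) * (f : A)
        = ((f : A) * (f : A)) * a * ((f : A) * (f : A)) from by noncomm_ring, hFF]
  -- globalization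
  have G1 : ∀ b : R, ∀ a : A, (b : A) * a * f ∈ R := by
    intro b
    refine Submodule.span_induction (p := fun (b : R) _ => ∀ a : A, (b : A) * a * (f : A) ∈ R)
      ?_ ?_ ?_ ?_ (hNtop b)
    · rintro y ⟨u, rfl⟩ a
      have h1 : ((f * u : R) : A) * a * f = (f : A) * ((u : A) * a) * f := by
        push_cast; noncomm_ring
      rw [h1]
      obtain ⟨r, hr⟩ := hcorner ((u : A) * a)
      rw [hr]
      exact r.2
    · intro a
      rw [show ((0 : R) : A) = 0 from rfl, zero_mul, zero_mul]
      exact R.zero_mem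
    · intro p q _ _ hp hq a
      have h1 : ((p + q : R) : A) * a * f = (p : A) * a * f + (q : A) * a * f := by
        push_cast; noncomm_ring
      rw [h1]
      exact R.add_mem (hp a) (hq a)
    · intro r x _ hx a
      have h1 : ((r • x : R) : A) * a * f = (r : A) * ((x : A) * a * f) := by
        rw [smul_eq_mul]; push_cast; noncomm_ring
      rw [h1]
      exact R.mul_mem r.2 (hx a)
  have haF : ∀ a : A, a * f ∈ R := by
    intro a
    have h := G1 1 a
    simpa using h
  have G2 : ∀ b : R, ∀ a : A, a * b ∈ R := by
    intro b
    refine Submodule.span_induction (p := fun (b : R) _ => ∀ a : A, a * (b : A) ∈ R)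
      ?_ ?_ ?_ ?_ (hNtop b)
    · rintro y ⟨u, rfl⟩ a
      have h1 : a * ((f * u : R) : A) = (a * f) * u := by push_cast; noncomm_ring
      rw [h1]
      exact R.mul_mem (haF a) u.2
    · intro a
      rw [show ((0 : R) : A) = 0 from rfl, mul_zero]
      exact R.zero_mem
    · intro p q _ _ hp hq a
      have h1 : a * ((p + q : R) : A) = a * p + a * (q : A) := by push_cast; noncomm_ring
      rw [h1]
      exact R.add_mem (hp a) (hq a)
    · intro r x _ hx a
      have h1 : a * ((r • x : R) : A) = (a * r) * (x : A) := by
        rw [smul_eq_mul]; push_cast; noncomm_ring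
      rw [h1]
      exact hx (a * r)
  refine (Subring.eq_top_iff' R).mpr fun a => ?_
  have h := G2 1 a
  simpa using h

end AuxMain

theorem statement_0 {A : Type*} [Ring A] [IsSimpleRing A] [IsArtinianRing A]
    (R' : Subring A) (P : Set A) (hprime : IsStrictFractionalPrime R' P)
    (R : Subring A) (hss : IsSemisimpleRing R) (hne : R ≠ ⊤) :
    ¬ R' ≤ R := by
  intro hR'R
  haveI : IsSemisimpleRing R := hss
  have WE : ∀ a : A, a ≠ 0 → ∃ x y : R, (x : A) * a * y ≠ 0 ∧ (x : A) * a * y ∈ R := by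
    intro a ha
    obtain ⟨x, hx, y, hy, h1, h2⟩ := hprime.2 a ha
    exact ⟨⟨x, hR'R hx⟩, ⟨y, hR'R hy⟩, h1, hR'R h2⟩
  exact hne (aux_main WE)
end

section
/- Let A be a simple Artinian ring and let (R',P) be a strict fractional prime in A such that R' is a Goldie ring. Then every regular element of R' is invertible in A, and every element of A can be written as s⁻¹r with r ∈ R' and s a regular element of R' (that is, the Ore localization of R' at its regular elements equals A). -/
open Pointwise

/-!
Let `s` be regular in `R'`. If `z * s = 0` with `z ≠ 0`, strict fractionality gives
`x * z * y ∈ R' \ {0}`, and a right Ore relation `y * s' = s * r'` gives `(x * z * y) * s' = 0`,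
which is absurd. So right multiplication by `s` is injective on the Artinian ring `A`, and `s` is
a unit. Hence the classical quotient ring of `R'` maps onto the subring `B` of left fractions
`s⁻¹ * r` of `A`, and `B` is semisimple.

`B` is simple: a central idempotent `ε ≠ 0, 1` of `B` satisfies `ε R' (1 - ε) = (1 - ε) R' ε = 0`,
so by primeness one of `A ε`, `(1 - ε) A` and one of `A (1 - ε)`, `ε A` lie in `P ⊆ R'`. Since
`A g A = A` for every nonzero idempotent `g`, each combination forces `R' = A`; but then `ε` is
central in the simple ring `A`, hence `0` or `1`.

Finally let `e` be an idempotent of `B` with `e B e` a division ring. For `w ∈ A` with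
`e w e ≠ 0`, strict fractionality and `B e B = B` give `u, v, x, y ∈ B` with
`e u (x (e w e) y) v e = (e u x e) (e w e) (e y v e) ≠ 0` in `B`; inverting the two outer factors
in `e B e` shows `e w e ∈ B`. Then `A = B e B A B e B ⊆ B`.
-/

open nonZeroDivisors

namespace IsSimpleRing

variable {S : Type*} [Ring S] [IsSimpleRing S]

theorem one_mem_of_mul_mul_mem {T : Set S} (hadd : ∀ x ∈ T, ∀ y ∈ T, x + y ∈ T)
    (hmul : ∀ a, ∀ x ∈ T, ∀ b, a * x * b ∈ T) {x : S} (hx : x ∈ T) (hx0 : x ≠ 0) : 1 ∈ T := by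
  let I : TwoSidedIdeal S := .mk' T (by simpa using hmul 0 x hx 0) (hadd _ · _ ·)
    (fun hy => by simpa using hmul (-1) _ hy 1) (fun {a y} hy => by simpa using hmul a y hy 1)
    (fun {y b} hy => by simpa using hmul 1 y hy b)
  have hmem : ∀ y, y ∈ I ↔ y ∈ T := TwoSidedIdeal.mem_mk' _ _ _ _ _ _
  rcases eq_bot_or_eq_top I with hI | hI
  · exact absurd ((TwoSidedIdeal.mem_bot S).mp (hI ▸ (hmem x).mpr hx)) hx0
  · exact (hmem 1).mp (hI ▸ TwoSidedIdeal.mem_top S)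

theorem eq_zero_or_one_of_isIdempotentElem {e : S} (he : IsIdempotentElem e)
    (hc : ∀ a, e * a = a * e) : e = 0 ∨ e = 1 := by
  refine or_iff_not_imp_left.mpr fun he0 => (sub_eq_zero.mp ?_).symm
  have hc' : ∀ b, b * (1 - e) = (1 - e) * b := fun b => by simp [mul_sub, sub_mul, hc b]
  simpa using one_mem_of_mul_mul_mem (T := {x | x * (1 - e) = 0})
    (fun x (hx : _ = 0) y (hy : _ = 0) => by simp [add_mul, hx, hy])
    (fun a x (hx : _ = 0) b => by simp [mul_assoc, hc' b, ← mul_assoc x, hx])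
    he.mul_one_sub_self he0

theorem exists_mul_mul_mul_mul_ne_zero {e c : S} (he : e ≠ 0) (hc : c ≠ 0) :
    ∃ u v, e * u * c * v * e ≠ 0 := by
  by_contra! h
  have hleft : ∀ u v, u * c * v * e = 0 := by
    simpa using one_mem_of_mul_mul_mem (T := {t | ∀ u v, t * u * c * v * e = 0})
      (fun x (hx : ∀ _ _, _) y (hy : ∀ _ _, _) u v => by simp [add_mul, hx u v, hy u v])
      (fun a x (hx : ∀ _ _, _) b u v => by
        rw [show a * x * b * u * c * v * e = a * (x * (b * u) * c * v * e) by
          simp only [mul_assoc], hx, mul_zero])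
      h he
  have hright : ∀ u v, u * c * v = 0 := by
    simpa using one_mem_of_mul_mul_mem (T := {t | ∀ u v, u * c * v * t = 0})
      (fun x (hx : ∀ _ _, _) y (hy : ∀ _ _, _) u v => by simp [mul_add, hx u v, hy u v])
      (fun a x (hx : ∀ _ _, _) b u v => by
        rw [show u * c * v * (a * x * b) = u * c * (v * a) * x * b by simp only [mul_assoc],
          hx, zero_mul])
      hleft he
  exact hc (by simpa using hright 1 1)

end IsSimpleRing

theorem IsIdempotentElem.mul_eq_self_of_mem_span {R : Type*} [Semiring R] {e x : R}
    (he : IsIdempotentElem e) (hx : x ∈ Ideal.span {e}) : x * e = x := by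
  obtain ⟨a, rfl⟩ := Ideal.mem_span_singleton'.mp hx
  rw [mul_assoc, he.eq]

namespace IsSemisimpleRing

variable {S : Type*} [Ring S] [IsSemisimpleRing S]

theorem eq_zero_of_forall_mul_mul_eq_zero {y : S} (h : ∀ b, y * b * y = 0) : y = 0 := by
  obtain ⟨k, hk, hspan⟩ := ideal_eq_span_idempotent (Ideal.span {y})
  obtain ⟨b, rfl⟩ := Ideal.mem_span_singleton'.mp (hspan ▸ Ideal.mem_span_singleton_self k)
  have hk0 : b * y = 0 := by rw [← hk.eq, mul_assoc, ← mul_assoc y, h, mul_zero]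
  calc y = y * (b * y) :=
        (hk.mul_eq_self_of_mem_span (hspan ▸ Ideal.mem_span_singleton_self y)).symm
    _ = 0 := by rw [hk0, mul_zero]

theorem isSimpleRing_of_forall_isIdempotentElem [Nontrivial S]
    (h : ∀ e : S, IsIdempotentElem e → (∀ q, e * q = q * e) → e = 0 ∨ e = 1) :
    IsSimpleRing S := by
  refine isSimpleRing_iff_isTwoSided_imp.mpr ⟨‹_›, fun I hI => ?_⟩
  obtain ⟨e, he, rfl⟩ := ideal_eq_span_idempotent I
  have hleft : ∀ q, e * q * (1 - e) = 0 := fun q => by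
    rw [mul_sub, mul_one, he.mul_eq_self_of_mem_span
      ((Ideal.span {e}).mul_mem_right q (Ideal.mem_span_singleton_self e)), sub_self]
  have hright : ∀ q, (1 - e) * q * e = 0 := fun q => eq_zero_of_forall_mul_mul_eq_zero fun b => by
    rw [show (1 - e) * q * e * b * ((1 - e) * q * e) = (1 - e) * q * (e * b * (1 - e)) * q * e by
      simp only [mul_assoc], hleft, mul_zero, zero_mul, zero_mul]
  have hcomm : ∀ q, e * q = q * e := fun q => by
    have h1 := hleft q
    have h2 := hright q
    simp only [mul_sub, sub_mul, mul_one, one_mul, sub_eq_zero] at h1 h2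
    rw [h1, h2]
  rcases h e he hcomm with rfl | rfl
  · exact .inl (by simp)
  · exact .inr (by simp)

theorem exists_isIdempotentElem_forall_exists_inv [Nontrivial S] :
    ∃ e : S, e ≠ 0 ∧ IsIdempotentElem e ∧
      ∀ u, e * u * e = u → u ≠ 0 → ∃ v, v * u = e ∧ u * v = e := by
  obtain ⟨I, hI⟩ := IsSemisimpleModule.exists_simple_submodule S S
  have hatom : IsAtom I := isSimpleModule_iff_isAtom.mp hI
  obtain ⟨e, he, rfl⟩ := ideal_eq_span_idempotent I
  have he0 : e ≠ 0 := by rintro rfl; exact hatom.1 (by simp)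
  have hcorner : ∀ u, e * u * e = u → e * u = u ∧ u * e = u := fun u hu =>
    ⟨by rw [← hu, ← mul_assoc, ← mul_assoc, he.eq], by rw [← hu, mul_assoc, he.eq]⟩
  have hleft : ∀ u, e * u * e = u → u ≠ 0 → ∃ v, e * v * e = v ∧ v * u = e := by
    intro u hu hu0
    have hle : Ideal.span {u} ≤ Ideal.span {e} := by
      rw [Ideal.span_singleton_le_iff_mem, ← hu]
      exact Ideal.mul_mem_left _ _ (Ideal.mem_span_singleton_self e)
    have heq := (hatom.le_iff.mp hle).resolve_left (by simpa using hu0)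
    obtain ⟨b, hb⟩ := Ideal.mem_span_singleton'.mp (heq ▸ Ideal.mem_span_singleton_self e)
    refine ⟨e * b * e, by simp only [mul_assoc, he.eq, he.mul_self_mul], ?_⟩
    rw [mul_assoc, (hcorner u hu).1, mul_assoc, hb, he.eq]
  refine ⟨e, he0, he, fun u hu hu0 => ?_⟩
  obtain ⟨v, hv, hvu⟩ := hleft u hu hu0
  obtain ⟨w, hw, hwv⟩ := hleft v hv (by rintro rfl; exact he0 (by simpa using hvu.symm))
  have huw : u = w := calc
    u = w * v * u := by rw [hwv, (hcorner u hu).1]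
    _ = w := by rw [mul_assoc, hvu, (hcorner w hw).2]
  exact ⟨v, hvu, huw ▸ hwv⟩

end IsSemisimpleRing

section

variable {A : Type*} [Ring A]

def Subring.IsStrictFractional (R : Subring A) : Prop :=
  ∀ r : A, r ≠ 0 → ∃ x ∈ R, ∃ y ∈ R, x * r * y ≠ 0 ∧ x * r * y ∈ R

theorem Subring.IsStrictFractional.mono {R B : Subring A} (hR : R.IsStrictFractional)
    (hRB : R ≤ B) : B.IsStrictFractional := fun r hr => by
  obtain ⟨x, hx, y, hy, hne, hmem⟩ := hR r hr
  exact ⟨x, hRB hx, y, hRB hy, hne, hRB hmem⟩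

theorem Subring.IsStrictFractional.isUnit [IsArtinianRing A] {R : Subring A}
    (hR : R.IsStrictFractional)
    (hore : ∀ (r : R), ∀ s ∈ R⁰, ∃ r' : R, ∃ s' ∈ R⁰, r * s' = s * r')
    {s : R} (hs : s ∈ R⁰) : IsUnit (s : A) := by
  refine IsArtinianRing.isUnit_iff_isRightRegular.mpr <|
    isRightRegular_of_non_zero_divisor _ fun z hz => ?_
  by_contra hz0
  obtain ⟨x, hx, y, hy, hne, hmem⟩ := hR z hz0
  obtain ⟨r', s', hs', heq⟩ := hore ⟨y, hy⟩ s hs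
  have : (⟨x * z * y, hmem⟩ : R) * s' = 0 := Subtype.ext <| calc
    x * z * y * s' = x * (z * s) * r' := by
      rw [mul_assoc, show y * (s' : A) = s * r' from congrArg Subtype.val heq]
      simp only [mul_assoc]
    _ = 0 := by rw [hz, mul_zero, zero_mul]
  exact hne (congrArg Subtype.val ((mul_right_mem_nonZeroDivisors_eq_zero_iff hs').mp this))

namespace Subring

variable {B : Subring A} [IsSimpleRing B]

theorem eq_top_of_forall_mul_mul_mem {e : B} (he0 : e ≠ 0) (h : ∀ w : A, (e : A) * w * e ∈ B) :
    B = ⊤ := by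
  have hr : ∀ w : A, w * e ∈ B := by
    simpa using IsSimpleRing.one_mem_of_mul_mul_mem (T := {t : B | ∀ w : A, (t : A) * w * e ∈ B})
      (fun x (hx : ∀ _, _) y (hy : ∀ _, _) w => by simpa [add_mul] using B.add_mem (hx w) (hy w))
      (fun a x (hx : ∀ _, _) b w => by simpa [mul_assoc] using B.mul_mem a.2 (hx (b * w)))
      h he0
  have hall : ∀ w : A, w ∈ B := by
    simpa using IsSimpleRing.one_mem_of_mul_mul_mem (T := {t : B | ∀ w : A, w * t ∈ B})
      (fun x (hx : ∀ _, _) y (hy : ∀ _, _) w => by simpa [mul_add] using B.add_mem (hx w) (hy w))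
      (fun a x (hx : ∀ _, _) b w => by simpa [mul_assoc] using B.mul_mem (hx (w * a)) b.2)
      hr he0
  exact eq_top_iff.mpr fun z _ => hall z

theorem IsStrictFractional.mul_mul_mem (hB : B.IsStrictFractional) {e : B}
    (he : IsIdempotentElem e) (hinv : ∀ u, e * u * e = u → u ≠ 0 → ∃ v, v * u = e ∧ u * v = e)
    (w : A) : (e : A) * w * e ∈ B := by
  have hE : IsIdempotentElem (e : A) := he.map B.subtype
  by_cases hw : (e : A) * w * e = 0
  · exact hw ▸ B.zero_mem
  obtain ⟨x, hx, y, hy, hc0, hc⟩ := hB _ hw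
  have he0 : e ≠ 0 := by rintro rfl; simp at hw
  obtain ⟨u, v, huv⟩ := IsSimpleRing.exists_mul_mul_mul_mul_ne_zero he0
    (c := ⟨_, hc⟩) fun h => hc0 (congrArg Subtype.val h)
  set d1 : B := e * u * ⟨x, hx⟩ * e
  set d2 : B := e * ⟨y, hy⟩ * v * e
  have hd : ((e * u * ⟨_, hc⟩ * v * e : B) : A) = d1 * ((e : A) * w * e) * d2 := by
    simp only [d1, d2, Subring.coe_mul, mul_assoc, hE.mul_self_mul]
  have hd1 : d1 ≠ 0 := fun h => huv (Subtype.ext (by simpa [h] using hd))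
  have hd2 : d2 ≠ 0 := fun h => huv (Subtype.ext (by simpa [h] using hd))
  obtain ⟨v1, hv1, -⟩ := hinv d1 (by simp only [d1, mul_assoc, he.eq, he.mul_self_mul]) hd1
  obtain ⟨v2, -, hv2⟩ := hinv d2 (by simp only [d2, mul_assoc, he.eq, he.mul_self_mul]) hd2
  have hvd : (e : A) * w * e = v1 * ((e * u * ⟨_, hc⟩ * v * e : B) : A) * v2 := calc
    (e : A) * w * e = e * ((e : A) * w * e) * e := by
      simp only [mul_assoc, hE.eq, hE.mul_self_mul]
    _ = (v1 * d1 : B) * ((e : A) * w * e) * (d2 * v2 : B) := by rw [hv1, hv2]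
    _ = _ := by rw [hd]; simp only [Subring.coe_mul, mul_assoc]
  exact hvd ▸ B.mul_mem (B.mul_mem v1.2 (Subtype.coe_prop _)) v2.2

theorem IsStrictFractional.eq_top [IsSemisimpleRing B] (hB : B.IsStrictFractional) : B = ⊤ := by
  obtain ⟨e, he0, he, hinv⟩ := IsSemisimpleRing.exists_isIdempotentElem_forall_exists_inv (S := B)
  exact eq_top_of_forall_mul_mul_mem he0 (hB.mul_mul_mem he hinv)

end Subring

theorem Subring.mem_of_isIdempotentElem [IsSimpleRing A] {R : Subring A} {g : A} (hg0 : g ≠ 0)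
    (hg : IsIdempotentElem g) (hl : ∀ a, a * g ∈ R) (hr : ∀ a, g * a ∈ R) (z : A) : z ∈ R := by
  have h1 := IsSimpleRing.one_mem_of_mul_mul_mem (T := {x | ∀ a b, a * x * b ∈ R})
    (fun x (hx : ∀ _ _, _) y (hy : ∀ _ _, _) a b => by
      simpa [mul_add, add_mul] using R.add_mem (hx a b) (hy a b))
    (fun a x (hx : ∀ _ _, _) b c d => by simpa [mul_assoc] using hx (c * a) (b * d))
    (fun a b => by simpa only [← mul_assoc, hg.mul_mul_self] using R.mul_mem (hl a) (hr b)) hg0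
  simpa using h1 z 1

namespace IsPrimeIn

variable {R : Subring A} {P : Set A}

theorem forall_mul_mem_or (hP : IsPrimeIn R P) {x y : A} (h : ∀ r ∈ R, x * r * y = 0) :
    (∀ a, a * x ∈ P) ∨ (∀ a, y * a ∈ P) := by
  by_contra! ⟨⟨a, ha⟩, ⟨b, hb⟩⟩
  refine (hP.2 (a * x) (y * b) fun r hr => ?_).elim ha hb
  rw [show a * x * r * (y * b) = a * (x * r * y) * b by simp only [mul_assoc], h r hr, mul_zero,
    zero_mul]
  exact hP.1.2.1

theorem eq_zero_or_one_of_isIdempotentElem [IsSimpleRing A] (hP : IsPrimeIn R P) {ε : A}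
    (hε : IsIdempotentElem ε) (hc : ∀ r ∈ R, ε * r = r * ε) : ε = 0 ∨ ε = 1 := by
  by_contra! hne
  suffices hall : ∀ z, z ∈ R from hne.1 <|
    (IsSimpleRing.eq_zero_or_one_of_isIdempotentElem hε fun a => hc a (hall a)).resolve_right hne.2
  have hPR : ∀ {x}, x ∈ P → x ∈ R := fun hx => hP.1.1 hx
  have hPadd : ∀ x ∈ P, ∀ y ∈ P, x + y ∈ P := hP.1.2.2.1
  rcases hP.forall_mul_mem_or (x := ε) (y := 1 - ε) (fun r hr => by
      rw [hc r hr, mul_assoc, hε.mul_one_sub_self, mul_zero]) with hl | hl <;>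
    rcases hP.forall_mul_mem_or (x := 1 - ε) (y := ε) (fun r hr => by
      rw [mul_assoc, ← hc r hr, ← mul_assoc, hε.one_sub_mul_self, zero_mul]) with hr | hr
  · exact fun z => hPR (by simpa [← mul_add] using hPadd _ (hl z) _ (hr z))
  · exact Subring.mem_of_isIdempotentElem hne.1 hε (fun a => hPR (hl a)) (fun a => hPR (hr a))
  · exact Subring.mem_of_isIdempotentElem (sub_ne_zero.mpr hne.2.symm) hε.one_sub
      (fun a => hPR (hr a)) (fun a => hPR (hl a))
  · exact fun z => hPR (by simpa [← add_mul] using hPadd _ (hr z) _ (hl z))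

theorem isSimpleRing_of_le [IsSimpleRing A] {B : Subring A} [IsSemisimpleRing B]
    (hP : IsPrimeIn R P) (hRB : R ≤ B) : IsSimpleRing B :=
  IsSemisimpleRing.isSimpleRing_of_forall_isIdempotentElem fun _ he hc =>
    (hP.eq_zero_or_one_of_isIdempotentElem (he.map B.subtype) fun r hr =>
      congrArg Subtype.val (hc ⟨r, hRB hr⟩)).imp Subtype.ext Subtype.ext

end IsPrimeIn

theorem mem_nonZeroDivisors_of_mem_regularIn {R : Subring A} {s : A} (hs : s ∈ regularIn R) :
    (⟨s, hs.1⟩ : R) ∈ R⁰ :=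
  ⟨fun z hz => Subtype.ext (hs.2.1 z z.2 (congrArg Subtype.val hz)),
    fun z hz => Subtype.ext (hs.2.2 z z.2 (congrArg Subtype.val hz))⟩

theorem mem_regularIn_of_isUnit {R : Subring A} {s : A} (hsR : s ∈ R) (hu : IsUnit s) :
    s ∈ regularIn R :=
  ⟨hsR, fun _ _ h => hu.mul_right_eq_zero.mp h, fun _ _ h => hu.mul_left_eq_zero.mp h⟩

section Fractions

variable {R : Subring A} [OreLocalization.OreSet R⁰] (hunit : ∀ s : R⁰, IsUnit ((s : R) : A))

noncomputable def fractionHom : OreLocalization R⁰ R →+* A :=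
  OreLocalization.universalHom R.subtype
    (IsUnit.liftRight ((R.subtype : R →* A).comp R⁰.subtype) hunit) fun _ => rfl

theorem le_range_fractionHom : R ≤ (fractionHom hunit).range := fun r hr =>
  ⟨OreLocalization.numeratorHom ⟨r, hr⟩, OreLocalization.universalHom_commutes _ _ _⟩

theorem exists_mul_mem_of_mem_range_fractionHom {a : A} (ha : a ∈ (fractionHom hunit).range) :
    ∃ s ∈ R⁰, (s : A) * a ∈ R := by
  obtain ⟨x, rfl⟩ := ha
  induction x using OreLocalization.ind with | _ r s
  have hx : fractionHom hunit (r /ₒ s) = ↑(hunit s).unit⁻¹ * r := rfl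
  refine ⟨s, s.2, ?_⟩
  rw [hx, ← mul_assoc, IsUnit.mul_val_inv, one_mul]
  exact r.2

instance [IsSemisimpleRing (OreLocalization R⁰ R)] :
    IsSemisimpleRing (fractionHom hunit).range :=
  (fractionHom hunit).rangeRestrict.isSemisimpleRing_of_surjective
    (fractionHom hunit).rangeRestrict_surjective

end Fractions

end

theorem statement_1 {A : Type*} [Ring A] [IsSimpleRing A] [IsArtinianRing A]
    (R' : Subring A) (P : Set A) (hprime : IsStrictFractionalPrime R' P)
    (hGoldie : IsGoldieRing R') :
    (∀ s ∈ regularIn R', IsUnit s) ∧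
    ∀ a : A, ∃ s ∈ regularIn R', ∃ r ∈ (R' : Set A), s * a = r := by
  obtain ⟨hP, hfrac : R'.IsStrictFractional⟩ := hprime
  obtain ⟨-, hore, _, _⟩ := hGoldie
  have hunit : ∀ s : R'⁰, IsUnit ((s : R') : A) := fun s => hfrac.isUnit hore s.2
  refine ⟨fun s hs => hunit ⟨_, mem_nonZeroDivisors_of_mem_regularIn hs⟩, fun a => ?_⟩
  have hle := le_range_fractionHom hunit
  have : IsSimpleRing (fractionHom hunit).range := hP.isSimpleRing_of_le hle
  have htop := (hfrac.mono hle).eq_top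
  obtain ⟨s, hs, hsa⟩ := exists_mul_mem_of_mem_range_fractionHom hunit (htop ▸ Subring.mem_top a)
  exact ⟨s, mem_regularIn_of_isUnit s.2 (hunit ⟨s, hs⟩), _, hsa, rfl⟩
end

section
/- Under the standing assumptions, P is the unique maximal two-sided ideal of R: every proper two-sided ideal of R is contained in P. Moreover, every regular element of R that does not lie in P is invertible in R. -/
open Pointwise

/-!
Conjugation invariance of `P` and primeness give `v⁻¹ ∈ A^P = R` for every unit `v ∉ P` of `A`;
so, unless `P = R`, the subring `R` contains `v` or `v⁻¹` for every unit `v`. In particular `R`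
contains every square-zero element `t`, as `1 + t` and `1 - t` are mutually inverse units.
If `A` has an idempotent `e ≠ 0, 1`, this puts `eA(1 - e)` and `(1 - e)Ae` into `R`, and since
`A = A(1 - e)A = AeA` also the corners `eAe` and `(1 - e)A(1 - e)`; hence `R = A` and the claims
follow from the simplicity of `A`. Otherwise the simple Artinian ring `A` is a division ring, and
every `x ∈ R \ P` is a unit of `A` whose inverse lies in `R`.
-/

section SimpleRing

variable {A : Type*} [Ring A]

theorem IsIdealOf.eq_of_one_mem {R : Subring A} {I : Set A} (hI : IsIdealOf R I)
    (h1 : (1 : A) ∈ I) : I = R :=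
  hI.1.antisymm fun r hr => by simpa using hI.2.2.2.2.1 r hr 1 h1

theorem IsIdealOf.one_mem_of_ne_zero_mem_of_top [IsSimpleRing A] {I : Set A}
    (hI : IsIdealOf ⊤ I) {x : A} (hx : x ≠ 0) (hxI : x ∈ I) : (1 : A) ∈ I := by
  obtain ⟨-, h0, hadd, hneg, hmul_left, hmul_right⟩ := hI
  exact (TwoSidedIdeal.mem_mk' ..).1 <| IsSimpleRing.one_mem_of_ne_zero_mem
    (.mk' I h0 (hadd _ · _) (hneg _ ·) (hmul_left _ trivial _ ·) (hmul_right _ trivial _ ·))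
    hx ((TwoSidedIdeal.mem_mk' ..).2 hxI)

theorem Subring.corner_mem_of_offDiag_mem [IsSimpleRing A] (R : Subring A) {e f : A}
    (hf : IsIdempotentElem f) (hf0 : f ≠ 0) (hef : ∀ a, e * a * f ∈ R)
    (hfe : ∀ a, f * a * e ∈ R) (a : A) : e * a * e ∈ R := by
  -- `{c | eAcAe ⊆ R}` is a two-sided ideal of the simple ring `A` containing `f`.
  let J : TwoSidedIdeal A := .mk' {c | ∀ x y, e * x * c * y * e ∈ R}
    (fun x y => by simp)
    (fun hc hd x y => by simpa only [mul_add, add_mul] using R.add_mem (hc x y) (hd x y))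
    (fun hc x y => by simpa only [mul_neg, neg_mul] using R.neg_mem (hc x y))
    (fun {z _} hc x y => by simpa only [mul_assoc] using hc (x * z) y)
    (fun {_ z} hc x y => by simpa only [mul_assoc] using hc x (z * y))
  have hfJ : f ∈ J := (TwoSidedIdeal.mem_mk' ..).2 fun x y => by
    convert R.mul_mem (hef x) (hfe y) using 1
    simp only [mul_assoc]
    rw [← mul_assoc f f, hf.eq]
  simpa using (TwoSidedIdeal.mem_mk' ..).1 (IsSimpleRing.one_mem_of_ne_zero_mem J hf0 hfJ) a 1

theorem isUnit_of_ne_zero_of_forall_isIdempotentElem [IsSemisimpleRing A]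
    (hidem : ∀ e : A, IsIdempotentElem e → e = 0 ∨ e = 1) {a : A} (ha : a ≠ 0) : IsUnit a := by
  obtain ⟨e, he, hann⟩ :=
    IsSemisimpleRing.ideal_eq_span_idempotent (LinearMap.ker (LinearMap.toSpanSingleton A A a))
  refine IsArtinianRing.isUnit_iff_isRightRegular.2 (isRightRegular_of_non_zero_divisor a ?_)
  intro y hy
  replace hy : y ∈ Ideal.span {e} := hann ▸ hy
  rcases hidem e he with rfl | rfl
  · simpa using hy
  · have h1 : (1 : A) ∈ LinearMap.ker (LinearMap.toSpanSingleton A A a) := by simp [hann]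
    exact (ha (by simpa using h1)).elim

end SimpleRing

section Prime

variable {A : Type*} [Ring A] {R : Subring A} {P : Set A}

theorem IsPrimeIn.inv_mem_of_notMem (hP : IsPrimeIn R P) (hRP : (R : Set A) = stabilizerSet P)
    (hinv : ∀ u : Aˣ, ∀ p ∈ P, (u : A) * p * (↑u⁻¹ : A) ∈ P) {v : Aˣ} (hv : (v : A) ∉ P) :
    (↑v⁻¹ : A) ∈ R := by
  obtain ⟨⟨-, -, -, -, hmul_left, hmul_right⟩, hprime⟩ := hP
  change (↑v⁻¹ : A) ∈ (R : Set A)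
  rw [hRP]
  refine ⟨fun p hp => (hprime _ v fun r hr => ?_).resolve_right hv,
    fun p hp => (hprime v _ fun r hr => ?_).resolve_left hv⟩
  · simpa only [mul_assoc, inv_inv] using hinv v⁻¹ _ (hmul_right r hr p hp)
  · simpa only [mul_assoc] using hinv v _ (hmul_left r hr p hp)

theorem IsPrimeIn.mem_or_inv_mem (hP : IsPrimeIn R P) (hRP : (R : Set A) = stabilizerSet P)
    (hinv : ∀ u : Aˣ, ∀ p ∈ P, (u : A) * p * (↑u⁻¹ : A) ∈ P) (h1 : (1 : A) ∉ P) (v : Aˣ) :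
    (v : A) ∈ R ∨ (↑v⁻¹ : A) ∈ R := by
  by_cases hv : (v : A) ∈ P
  · have hv' : (↑v⁻¹ : A) ∉ P := fun hvi =>
      h1 (by simpa using hP.1.2.2.2.2.1 _ (hP.1.1 hvi) _ hv)
    exact .inl (by simpa using hP.inv_mem_of_notMem hRP hinv hv')
  · exact .inr (hP.inv_mem_of_notMem hRP hinv hv)

theorem Subring.mem_of_mul_self_eq_zero (hR : ∀ v : Aˣ, (v : A) ∈ R ∨ (↑v⁻¹ : A) ∈ R) {t : A}
    (ht : t * t = 0) : t ∈ R := by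
  let v : Aˣ := ⟨1 + t, 1 - t, by simp [mul_sub, add_mul, ht], by simp [sub_mul, mul_add, ht]⟩
  rcases hR v with h | h
  · simpa [v] using R.sub_mem h R.one_mem
  · simpa [v] using R.sub_mem R.one_mem h

theorem Subring.eq_top_of_isIdempotentElem [IsSimpleRing A]
    (hR : ∀ v : Aˣ, (v : A) ∈ R ∨ (↑v⁻¹ : A) ∈ R) {e : A} (he : IsIdempotentElem e)
    (he0 : e ≠ 0) (he1 : e ≠ 1) : R = ⊤ := by
  have hoff : ∀ {e f : A}, f * e = 0 → ∀ a, e * a * f ∈ R := fun {e f} hfe a =>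
    mem_of_mul_self_eq_zero hR (by simp only [mul_assoc, ← mul_assoc f e, hfe]; simp)
  have h12 := hoff he.one_sub_mul_self
  have h21 := hoff he.mul_one_sub_self
  have h11 := R.corner_mem_of_offDiag_mem he.one_sub (sub_ne_zero.2 he1.symm) h12 h21
  have h22 := R.corner_mem_of_offDiag_mem he he0 h21 h12
  refine eq_top_iff.2 fun a _ => ?_
  rw [show a = e * a * e + e * a * (1 - e) + (1 - e) * a * e + (1 - e) * a * (1 - e) by
    noncomm_ring]
  exact add_mem (add_mem (add_mem (h11 a) (h12 a)) (h21 a)) (h22 a)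

end Prime

theorem statement_5_general {A : Type*} [Ring A] [IsSimpleRing A] [IsArtinianRing A]
    (R : Subring A) (P : Set A)
    (hprime : IsStrictFractionalPrime R P)
    (hRP : (R : Set A) = stabilizerSet P)
    (hinv : ∀ u : Aˣ, ∀ p ∈ P, (u : A) * p * (↑u⁻¹ : A) ∈ P) :
    (∀ I : Set A, IsIdealOf R I → I ≠ (R : Set A) → I ⊆ P) ∧
    ∀ u ∈ regularIn R, u ∉ P → ∃ w ∈ R, u * w = 1 ∧ w * u = 1 := by
  have hP := hprime.1
  have hne : ∀ {x : A}, x ∉ P → x ≠ 0 := fun hxP hx => hxP (hx ▸ hP.1.2.1)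
  by_cases h1 : (1 : A) ∈ P
  · have hPR := hP.1.eq_of_one_mem h1
    exact ⟨fun I hI _ => hPR ▸ hI.1, fun u hu hup => (hup (hPR ▸ hu.1)).elim⟩
  have hunit : ∀ u : A, IsUnit u → u ∉ P → ∃ w ∈ R, u * w = 1 ∧ w * u = 1 := by
    rintro _ ⟨v, rfl⟩ hv
    exact ⟨_, hP.inv_mem_of_notMem hRP hinv hv, v.mul_inv, v.inv_mul⟩
  by_cases hidem : ∃ e : A, IsIdempotentElem e ∧ e ≠ 0 ∧ e ≠ 1
  · obtain ⟨e, he, he0, he1⟩ := hidem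
    obtain rfl := Subring.eq_top_of_isIdempotentElem (hP.mem_or_inv_mem hRP hinv h1) he he0 he1
    refine ⟨fun I hI hIR x hxI => by_contra fun hxP => ?_, fun u hu hup => hunit u ?_ hup⟩
    · exact hIR (hI.eq_of_one_mem (hI.one_mem_of_ne_zero_mem_of_top (hne hxP) hxI))
    · exact IsArtinianRing.isUnit_iff_isRightRegular.2
        (isRightRegular_of_non_zero_divisor u fun y => hu.2.2 y trivial)
  · push Not at hidem
    have hdiv : ∀ {a : A}, a ≠ 0 → IsUnit a := isUnit_of_ne_zero_of_forall_isIdempotentElem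
      fun e he => or_iff_not_imp_left.2 (hidem e he)
    refine ⟨fun I hI hIR x hxI => by_contra fun hxP => ?_,
      fun u _ hup => hunit u (hdiv (hne hup)) hup⟩
    obtain ⟨w, hw, -, hwx⟩ := hunit x (hdiv (hne hxP)) hxP
    exact hIR (hI.eq_of_one_mem (hwx ▸ hI.2.2.2.2.1 w hw x hxI))

theorem statement_5 {A : Type*} [Ring A] [IsSimpleRing A] [IsArtinianRing A]
    (R : Subring A) (P : Set A)
    (hprime : IsStrictFractionalPrime R P)
    (hRP : (R : Set A) = stabilizerSet P)
    (hGoldie : IsGoldieRing R)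
    (hinv : ∀ u : Aˣ, ∀ p ∈ P, (u : A) * p * (↑u⁻¹ : A) ∈ P) :
    (∀ I : Set A, IsIdealOf R I → I ≠ (R : Set A) → I ⊆ P) ∧
    ∀ u ∈ regularIn R, u ∉ P → ∃ w ∈ R, u * w = 1 ∧ w * u = 1 :=
  statement_5_general R P hprime hRP hinv
end

section
/- Let R be a Noetherian Dubrovin valuation ring of a simple Artinian ring A with Jacobson radical P. Then for all fractional R-ideals I and J of A: IJ ⊆ P if and only if JI ⊆ P. -/
open Pointwise

/-!
If `J * I ⊄ P`, the additive group `C` generated by `J * I` is an `R`-bimodule not contained in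
`P`. The Dubrovin condition moves an element of `C` into `R \ P`; as `R / P` is simple and `P` is
the Jacobson radical, the ideal `C ∩ R` of `R` is all of `R`, so `1 ∈ C`. Hence
`J ⊆ C J ⊆ ⟨J I J⟩ ⊆ ⟨J P⟩`. For a regular `w ∈ R` with `w J ⊆ R`, the right ideal generated by
`w J` is finitely generated and equal to its product with the radical, so it is zero by Nakayama's
lemma, contradicting the presence of a regular element in `J`.
-/

namespace TwoSidedIdeal

variable {S : Type*} [Ring S]

theorem one_mem_of_le_of_not_le {Q T : TwoSidedIdeal S} (hQ : IsSimpleRing Q.ringCon.Quotient)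
    (hle : Q ≤ T) (hT : ¬ T ≤ Q) : (1 : S) ∈ T := by
  have hker : Q.ringCon ≤ RingCon.ker T.ringCon.mk' := fun a b hab =>
    T.ringCon.eq.mpr ((T.rel_iff a b).mpr (hle ((Q.rel_iff a b).mp hab)))
  rcases IsSimpleRing.injective_ringHom_or_subsingleton_codomain (Q.ringCon.lift _ hker)
    with hinj | hsub
  · refine absurd (fun x hx => ?_) hT
    rw [← ker_ringCon_mk' Q, mem_ker]
    apply hinj
    rw [RingCon.lift_mk', map_zero, ← mem_ker, ker_ringCon_mk']
    exact hx
  · rw [← ker_ringCon_mk' T, mem_ker]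
    exact Subsingleton.elim _ _

end TwoSidedIdeal

namespace Ring

variable {S : Type*} [Ring S]

theorem exists_mul_add_one_eq_one {x : S} (hx : x ∈ jacobson S) : ∃ u, u * (x + 1) = 1 := by
  rw [← Ideal.jacobson_bot] at hx
  obtain ⟨u, hu⟩ := Ideal.exists_mul_add_sub_mem_of_mem_jacobson x hx
  exact ⟨u, sub_eq_zero.mp hu⟩

theorem isUnit_add_one_of_mem_jacobson {x : S} (hx : x ∈ jacobson S) : IsUnit (x + 1) := by
  obtain ⟨u, hu⟩ := exists_mul_add_one_eq_one hx
  obtain ⟨v, hv⟩ := exists_mul_add_one_eq_one (neg_mem (Ideal.mul_mem_left _ u hx))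
  have hvu : v * u = 1 := by
    rwa [show -(u * x) + 1 = u by rw [← hu, mul_add_one]; abel] at hv
  have hv_eq : v = x + 1 := left_inv_eq_right_inv hvu hu
  exact ⟨⟨x + 1, u, hv_eq ▸ hvu, hu⟩, rfl⟩

theorem op_mem_jacobson_mulOpposite {x : S} (hx : x ∈ jacobson S) :
    MulOpposite.op x ∈ jacobson Sᵐᵒᵖ := by
  rw [← Ideal.jacobson_bot, Ideal.mem_jacobson_iff]
  intro y
  obtain ⟨u, hu⟩ := isUnit_add_one_of_mem_jacobson (Ideal.mul_mem_right y.unop _ hx)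
  refine ⟨MulOpposite.op ↑u⁻¹, (Submodule.mem_bot _).mpr (MulOpposite.unop_injective ?_)⟩
  simp only [MulOpposite.unop_sub, MulOpposite.unop_add, MulOpposite.unop_mul,
    MulOpposite.unop_op, MulOpposite.unop_one, MulOpposite.unop_zero]
  rw [← mul_assoc, ← add_one_mul (x * _), ← hu, Units.mul_inv, sub_self]

theorem one_mem_of_mem_of_notMem_jacobson
    (hS : IsSimpleRing (jacobson S).toTwoSided.ringCon.Quotient) {K : TwoSidedIdeal S} {x : S}
    (hxK : x ∈ K) (hx : x ∉ jacobson S) : (1 : S) ∈ K := by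
  have hsup : (1 : S) ∈ (jacobson S).toTwoSided ⊔ K :=
    TwoSidedIdeal.one_mem_of_le_of_not_le hS le_sup_left
      fun h => hx (Ideal.mem_toTwoSided.mp (h (TwoSidedIdeal.mem_sup_right hxK)))
  obtain ⟨q, hq, k, hk, hqk⟩ := TwoSidedIdeal.mem_sup.mp hsup
  obtain ⟨u, hu⟩ := exists_mul_add_one_eq_one (neg_mem (Ideal.mem_toTwoSided.mp hq))
  rw [neg_add_eq_sub, ← eq_sub_of_add_eq' hqk] at hu
  exact hu ▸ K.mul_mem_left u k hk

end Ring

open MulOpposite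

section Dubrovin

variable {A : Type*} [Ring A] {R : Subring A}

theorem Subring.mul_eq_zero_of_subset_closure_mul_jacobson [IsNoetherianRing Rᵐᵒᵖ] {J : Set A}
    {w : A} (hw : ∀ x ∈ J, w * x ∈ R)
    (hJ : J ⊆ AddSubgroup.closure (J * ((↑) '' (Ring.jacobson R : Set R)))) :
    ∀ x ∈ J, w * x = 0 := by
  let g : J → Rᵐᵒᵖ := fun x => op ⟨w * x, hw x x.2⟩
  let W : Ideal Rᵐᵒᵖ := Ideal.span (Set.range g)
  let φ : Rᵐᵒᵖ →+ A := R.subtype.toAddMonoidHom.comp opAddEquiv.symm.toAddMonoidHom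
  have hφ : Function.Injective φ := fun _ _ h =>
    MulOpposite.unop_injective (Subtype.val_injective h)
  have hle : W ≤ Ring.jacobson Rᵐᵒᵖ • W := by
    rw [Ideal.span_le]
    rintro _ ⟨⟨x, hx⟩, rfl⟩
    have hclosure : AddSubgroup.closure (J * ((↑) '' (Ring.jacobson R : Set R))) ≤
        ((Ring.jacobson Rᵐᵒᵖ • W).toAddSubgroup.map φ).comap (AddMonoidHom.mulLeft w) := by
      rw [AddSubgroup.closure_le]
      rintro _ ⟨j, hj, _, ⟨ρ, hρ, rfl⟩, rfl⟩
      exact ⟨op ρ • g ⟨j, hj⟩,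
        Submodule.smul_mem_smul (Ring.op_mem_jacobson_mulOpposite hρ) (Ideal.subset_span ⟨_, rfl⟩),
        by simp [φ, g, mul_assoc]⟩
    obtain ⟨z, hz, hφz⟩ := hclosure (hJ hx)
    rwa [@hφ z (g ⟨x, hx⟩) hφz] at hz
  have hW : W = ⊥ := Submodule.FG.eq_bot_of_le_jacobson_smul (IsNoetherian.noetherian W) hle
  intro x hx
  have hx : g ⟨x, hx⟩ ∈ W := Ideal.subset_span ⟨_, rfl⟩
  rw [hW, Submodule.mem_bot] at hx
  exact congrArg (fun z : Rᵐᵒᵖ => ((unop z : R) : A)) hx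

theorem IsFractionalIdeal.not_subset_closure_mul_jacobson [Nontrivial A]
    [IsNoetherianRing Rᵐᵒᵖ] {J : Set A} (hJ : IsFractionalIdeal R J) :
    ¬ J ⊆ AddSubgroup.closure (J * ((↑) '' (Ring.jacobson R : Set R))) := by
  intro hJrad
  obtain ⟨v, hvJ, hv⟩ := hJ.2.2.2.1
  obtain ⟨w, hw, hwJ⟩ := hJ.2.2.2.2
  have hv0 : v = 0 :=
    hw.2.1 v hv.1 (R.mul_eq_zero_of_subset_closure_mul_jacobson hwJ hJrad v hvJ)
  exact one_ne_zero (hv.2.1 1 R.one_mem (by rw [hv0, zero_mul]))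

theorem IsDubrovinValuation.one_mem_of_not_subset {P : Set A} (hdub : IsDubrovinValuation R P)
    (hjac : IsJacobsonRadicalOf R P) {M : AddSubgroup A} (hl : ∀ r ∈ R, ∀ m ∈ M, r * m ∈ M)
    (hr : ∀ r ∈ R, ∀ m ∈ M, m * r ∈ M) (hM : ¬ (M : Set A) ⊆ P) : (1 : A) ∈ M := by
  obtain ⟨a, haM, haP⟩ := Set.not_subset.mp hM
  obtain ⟨b, hbR, hbM, hbP⟩ : ∃ b ∈ R, b ∈ M ∧ b ∉ P := by
    by_cases haR : a ∈ R
    · exact ⟨a, haR, haM, haP⟩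
    · obtain ⟨x, hxR, hxaR, hxaP⟩ := (hdub.2.2 a haR).1
      exact ⟨x * a, hxaR, hl x hxR a haM, hxaP⟩
  have hP : ∀ x : R, x ∈ (Ring.jacobson R).toTwoSided ↔ (x : A) ∈ P := fun x => by
    rw [Ideal.mem_toTwoSided, hjac, Ideal.jacobson_bot]
  let K : TwoSidedIdeal R := .mk' {x | (x : A) ∈ M} M.zero_mem M.add_mem M.neg_mem
    (fun {x _} hy => hl x x.2 _ hy) (fun {_ y} hx => hr y y.2 _ hx)
  have hK : ∀ x : R, x ∈ K ↔ (x : A) ∈ M := fun x => TwoSidedIdeal.mem_mk' ..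
  refine (hK 1).mp (Ring.one_mem_of_mem_of_notMem_jacobson (hdub.2.1 _ hP).1
    ((hK ⟨b, hbR⟩).mpr hbM) fun h => hbP ((hP _).mp (Ideal.mem_toTwoSided.mpr h)))

theorem IsDubrovinValuation.mul_subset_of_mul_subset [Nontrivial A] [IsNoetherianRing Rᵐᵒᵖ]
    {P : Set A} (hdub : IsDubrovinValuation R P) (hjac : IsJacobsonRadicalOf R P) {I J : Set A}
    (hI : IsFractionalIdeal R I) (hJ : IsFractionalIdeal R J) (hIJ : I * J ⊆ P) :
    J * I ⊆ P := by
  let C := AddSubgroup.closure (J * I)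
  have hCl : ∀ r ∈ R, ∀ c ∈ C, r * c ∈ C := fun r hr =>
    (AddSubgroup.closure_le (C.comap (AddMonoidHom.mulLeft r))).mpr <| by
      rintro _ ⟨j, hj, i, hi, rfl⟩
      exact AddSubgroup.subset_closure ⟨r * j, hJ.2.1 r hr j hj, i, hi, mul_assoc ..⟩
  have hCr : ∀ r ∈ R, ∀ c ∈ C, c * r ∈ C := fun r hr =>
    (AddSubgroup.closure_le (C.comap (AddMonoidHom.mulRight r))).mpr <| by
      rintro _ ⟨j, hj, i, hi, rfl⟩
      exact AddSubgroup.subset_closure ⟨j, hj, i * r, hI.2.2.1 r hr i hi, (mul_assoc ..).symm⟩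
  by_contra hJI
  have h1 : (1 : A) ∈ C :=
    hdub.one_mem_of_not_subset hjac hCl hCr fun h => hJI (AddSubgroup.subset_closure.trans h)
  refine hJ.not_subset_closure_mul_jacobson fun y hy => ?_
  have hC : C ≤ (AddSubgroup.closure (J * ((↑) '' (Ring.jacobson R : Set R)))).comap
      (AddMonoidHom.mulRight y) := by
    rw [AddSubgroup.closure_le]
    rintro _ ⟨j, hj, i, hi, rfl⟩
    have hiy : i * y ∈ P := hIJ ⟨i, hi, y, hy, rfl⟩
    have hiy_rad : (⟨i * y, hdub.1.1 hiy⟩ : R) ∈ Ring.jacobson R := by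
      rw [← Ideal.jacobson_bot]
      exact (hjac _).mp hiy
    exact AddSubgroup.subset_closure ⟨j, hj, i * y, ⟨_, hiy_rad, rfl⟩, (mul_assoc ..).symm⟩
  simpa using hC h1

end Dubrovin

theorem statement_16_general {A : Type*} [Ring A] [IsSimpleRing A]
    (R : Subring A) (P : Set A)
    (hdub : IsDubrovinValuation R P)
    (hjac : IsJacobsonRadicalOf R P)
    (hnoethop : IsNoetherianRing (↥R)ᵐᵒᵖ) :
    ∀ I J : Set A, IsFractionalIdeal R I → IsFractionalIdeal R J →
      (I * J ⊆ P ↔ J * I ⊆ P) := fun _ _ hI hJ =>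
  ⟨hdub.mul_subset_of_mul_subset hjac hI hJ, hdub.mul_subset_of_mul_subset hjac hJ hI⟩

theorem statement_16 {A : Type*} [Ring A] [IsSimpleRing A] [IsArtinianRing A]
    (R : Subring A) (P : Set A)
    (hdub : IsDubrovinValuation R P)
    (hjac : IsJacobsonRadicalOf R P)
    (hnoeth : IsNoetherianRing R) (hnoethop : IsNoetherianRing (↥R)ᵐᵒᵖ) :
    ∀ I J : Set A, IsFractionalIdeal R I → IsFractionalIdeal R J →
      (I * J ⊆ P ↔ J * I ⊆ P) :=
  statement_16_general R P hdub hjac hnoethop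
end
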